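/- Fix μ, λ > 0 and k, k̂ ∈ ℝ, and define σ̂ : Sym(3) → Sym(3) by σ̂(X) = 2 μ exp(k ‖X‖²) exp(−tr X) X + λ exp(k̂ (tr X)²) exp(−tr X) (tr X) · 𝟙 (scalar exponentials, 𝟙 the 3×3 identity matrix). If k ≥ 3/8 and k̂ ≥ 1/8 then ⟨σ̂(X₁) − σ̂(X₂), X₁ − X₂⟩ ≥ 0 for all X₁, X₂ ∈ Sym(3); if moreover k > 3/8 then ⟨σ̂(X₁) − σ̂(X₂), X₁ − X₂⟩ > 0 for all X₁ ≠ X₂ in Sym(3). -/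

import Mathlib

/-! Write `H = X₁ − X₂`. Up to the factor `2μ`, the pairing of the shear term
`e^{k‖X‖² − tr X} X` with `H` along the segment `X₂ + sH` is a scalar function of `s` whose
derivative is a positive exponential times `2k b² − (tr H) b + ‖H‖²`, `b = ⟨X₂ + sH, H⟩`.
Since `(tr H)² ≤ 3‖H‖²`, the discriminant `(tr H)² − 8k‖H‖²` is `≤ 0` for `k ≥ 3/8`, and `< 0`
for `k > 3/8` and `H ≠ 0`, so the function is (strictly) increasing.
The volumetric term contributes `λ (f(tr X₁) − f(tr X₂)) (tr X₁ − tr X₂)` with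
`f(t) = t e^{k̂t² − t}`, which is monotone because `f'(t) = e^{k̂t² − t} (2k̂t² − t + 1)` and
`k̂ ≥ 1/8`. -/

open Matrix

noncomputable section

abbrev M3 := Matrix (Fin 3) (Fin 3) ℝ

/-- The Cauchy stress of the full exponentiated Hencky energy:
`σ̂(X) = 2 μ e^{k ‖X‖²} e^{−tr X} X + λ e^{k̂ (tr X)²} e^{−tr X} (tr X) 𝟙`,
with `‖X‖² = tr(X Xᵀ)`. -/
noncomputable def expHenckyStressFull (μ lam k khat : ℝ) (X : M3) : M3 :=
  (2 * μ * Real.exp (k * Matrix.trace (X * Xᵀ)) * Real.exp (-Matrix.trace X)) • X +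
    (lam * Real.exp (khat * (Matrix.trace X) ^ 2) * Real.exp (-Matrix.trace X) *
      Matrix.trace X) • (1 : M3)

open Real

section QuadraticFactor

variable {k c h : ℝ}

lemma two_mul_sq_sub_mul_add_nonneg (hk : 0 ≤ k) (hh : 0 ≤ h) (hc : c ^ 2 ≤ 8 * k * h)
    (b : ℝ) : 0 ≤ 2 * k * b ^ 2 - c * b + h := by
  rcases hk.eq_or_lt with rfl | hk
  · nlinarith
  · nlinarith [sq_nonneg (4 * k * b - c)]

lemma two_mul_sq_sub_mul_add_pos (hk : 0 ≤ k) (hc : c ^ 2 < 8 * k * h) (b : ℝ) :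
    0 < 2 * k * b ^ 2 - c * b + h := by
  rcases hk.eq_or_lt with rfl | hk
  · nlinarith
  · nlinarith [sq_nonneg (4 * k * b - c)]

end QuadraticFactor

lemma monotone_mul_exp_sq_sub {κ : ℝ} (hκ : 1 / 8 ≤ κ) :
    Monotone fun t : ℝ => t * exp (κ * t ^ 2 - t) := by
  refine monotone_of_hasDerivAt_nonneg (f' := fun t => exp (κ * t ^ 2 - t) *
    (2 * κ * t ^ 2 - 1 * t + 1)) (fun t => ?_) (fun t => ?_)
  · have := (hasDerivAt_id' t).mul
      (((hasDerivAt_pow 2 t).const_mul κ).sub (hasDerivAt_id' t)).exp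
    exact this.congr_deriv (by simp only [Pi.sub_apply]; push_cast; ring)
  · exact mul_nonneg (exp_pos _).le
      (two_mul_sq_sub_mul_add_nonneg (by linarith) zero_le_one (by linarith) t)

lemma mul_exp_sq_sub_sub_mul_sub_nonneg {κ : ℝ} (hκ : 1 / 8 ≤ κ) (x y : ℝ) :
    0 ≤ (x * exp (κ * x ^ 2 - x) - y * exp (κ * y ^ 2 - y)) * (x - y) :=
  ((monotone_mul_exp_sq_sub hκ).monovary monotone_id).sub_mul_sub_nonneg y x

def expQuadraticMulLinear (k q a h t c s : ℝ) : ℝ :=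
  exp (k * (q + 2 * a * s + h * s ^ 2) - (t + c * s)) * (a + h * s)

section ExpQuadraticMulLinear

variable (k q a h t c : ℝ)

lemma hasDerivAt_expQuadraticMulLinear (s : ℝ) :
    HasDerivAt (expQuadraticMulLinear k q a h t c)
      (exp (k * (q + 2 * a * s + h * s ^ 2) - (t + c * s)) *
        (2 * k * (a + h * s) ^ 2 - c * (a + h * s) + h)) s := by
  have hlin : ∀ u v : ℝ, HasDerivAt (fun s => u + v * s) v s := fun u v => by
    simpa using ((hasDerivAt_id' s).const_mul v).const_add u
  have hquad : HasDerivAt (fun s => q + 2 * a * s + h * s ^ 2) (2 * a + h * (2 * s)) s := by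
    have := ((hasDerivAt_id' s).const_mul (2 * a)).const_add q |>.add
      ((hasDerivAt_pow 2 s).const_mul h)
    exact this.congr_deriv (by push_cast; ring)
  have := ((hquad.const_mul k).sub (hlin t c)).exp.mul (hlin a h)
  exact this.congr_deriv (by simp only [Pi.sub_apply]; ring)

variable {k h c}

lemma monotone_expQuadraticMulLinear (hk : 0 ≤ k) (hh : 0 ≤ h) (hc : c ^ 2 ≤ 8 * k * h) :
    Monotone (expQuadraticMulLinear k q a h t c) :=
  monotone_of_hasDerivAt_nonneg (hasDerivAt_expQuadraticMulLinear k q a h t c) fun _ =>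
    mul_nonneg (exp_pos _).le (two_mul_sq_sub_mul_add_nonneg hk hh hc _)

lemma strictMono_expQuadraticMulLinear (hk : 0 ≤ k) (hc : c ^ 2 < 8 * k * h) :
    StrictMono (expQuadraticMulLinear k q a h t c) :=
  strictMono_of_hasDerivAt_pos (hasDerivAt_expQuadraticMulLinear k q a h t c) fun _ =>
    mul_pos (exp_pos _) (two_mul_sq_sub_mul_add_pos hk hc _)

end ExpQuadraticMulLinear

namespace Matrix

variable {n : Type*} [Fintype n]

lemma trace_mul_transpose_comm (A B : Matrix n n ℝ) : trace (A * Bᵀ) = trace (B * Aᵀ) := by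
  rw [← trace_transpose, transpose_mul, transpose_transpose]

lemma trace_mul_transpose_self_nonneg (A : Matrix n n ℝ) : 0 ≤ trace (A * Aᵀ) := by
  simpa [conjTranspose_eq_transpose_of_trivial] using
    (posSemidef_self_mul_conjTranspose A).trace_nonneg

lemma trace_mul_transpose_self_pos {A : Matrix n n ℝ} (hA : A ≠ 0) : 0 < trace (A * Aᵀ) := by
  refine (trace_mul_transpose_self_nonneg A).lt_of_ne' fun h => hA ?_
  exact trace_mul_conjTranspose_self_eq_zero_iff.mp
    (by rwa [conjTranspose_eq_transpose_of_trivial])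

lemma sq_trace_le_card_mul_trace_mul_transpose_self (A : Matrix n n ℝ) :
    trace A ^ 2 ≤ Fintype.card n * trace (A * Aᵀ) := by
  calc trace A ^ 2 ≤ Fintype.card n * ∑ i, A i i ^ 2 := sq_sum_le_card_mul_sum_sq
    _ ≤ Fintype.card n * trace (A * Aᵀ) := by
      gcongr
      simp only [trace, diag, mul_apply, transpose_apply, ← sq]
      exact Finset.sum_le_sum fun i _ =>
        Finset.single_le_sum (f := fun j => A i j ^ 2) (fun _ _ => sq_nonneg _)
          (Finset.mem_univ i)

end Matrix

section ExpNormSqTraceSmul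

variable {n : Type*} [Fintype n]

def expNormSqTraceSmul (k : ℝ) (X : Matrix n n ℝ) : Matrix n n ℝ :=
  exp (k * trace (X * Xᵀ) - trace X) • X

lemma trace_expNormSqTraceSmul_add_smul_mul_transpose (k s : ℝ) (X H : Matrix n n ℝ) :
    trace (expNormSqTraceSmul k (X + s • H) * Hᵀ) =
      expQuadraticMulLinear k (trace (X * Xᵀ)) (trace (X * Hᵀ)) (trace (H * Hᵀ)) (trace X)
        (trace H) s := by
  simp only [expNormSqTraceSmul, expQuadraticMulLinear, transpose_add, transpose_smul,
    add_mul, mul_add, smul_mul, Matrix.mul_smul, trace_add, trace_smul, smul_eq_mul,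
    trace_mul_transpose_comm H X]
  ring_nf

lemma trace_expNormSqTraceSmul_sub_mul_transpose_sub (k : ℝ) (X Y : Matrix n n ℝ) :
    trace ((expNormSqTraceSmul k X - expNormSqTraceSmul k Y) * (X - Y)ᵀ) =
      expQuadraticMulLinear k (trace (Y * Yᵀ)) (trace (Y * (X - Y)ᵀ))
          (trace ((X - Y) * (X - Y)ᵀ)) (trace Y) (trace (X - Y)) 1 -
        expQuadraticMulLinear k (trace (Y * Yᵀ)) (trace (Y * (X - Y)ᵀ))
          (trace ((X - Y) * (X - Y)ᵀ)) (trace Y) (trace (X - Y)) 0 := by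
  rw [← trace_expNormSqTraceSmul_add_smul_mul_transpose,
    ← trace_expNormSqTraceSmul_add_smul_mul_transpose, zero_smul, one_smul, add_zero,
    add_sub_cancel, sub_mul, trace_sub]

variable {k : ℝ}

lemma trace_expNormSqTraceSmul_sub_mul_transpose_sub_nonneg (hk : Fintype.card n ≤ 8 * k)
    (X Y : Matrix n n ℝ) :
    0 ≤ trace ((expNormSqTraceSmul k X - expNormSqTraceSmul k Y) * (X - Y)ᵀ) := by
  have hh := trace_mul_transpose_self_nonneg (X - Y)
  have hc : trace (X - Y) ^ 2 ≤ 8 * k * trace ((X - Y) * (X - Y)ᵀ) :=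
    (sq_trace_le_card_mul_trace_mul_transpose_self _).trans (by gcongr)
  rw [trace_expNormSqTraceSmul_sub_mul_transpose_sub, sub_nonneg]
  exact monotone_expQuadraticMulLinear _ _ _
    (by linarith [(Fintype.card n).cast_nonneg (α := ℝ)]) hh hc zero_le_one

lemma trace_expNormSqTraceSmul_sub_mul_transpose_sub_pos (hk : Fintype.card n < 8 * k)
    {X Y : Matrix n n ℝ} (hXY : X ≠ Y) :
    0 < trace ((expNormSqTraceSmul k X - expNormSqTraceSmul k Y) * (X - Y)ᵀ) := by
  have hh := trace_mul_transpose_self_pos (sub_ne_zero.mpr hXY)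
  have hc : trace (X - Y) ^ 2 < 8 * k * trace ((X - Y) * (X - Y)ᵀ) :=
    (sq_trace_le_card_mul_trace_mul_transpose_self _).trans_lt (by gcongr)
  rw [trace_expNormSqTraceSmul_sub_mul_transpose_sub, sub_pos]
  exact strictMono_expQuadraticMulLinear _ _ _
    (by linarith [(Fintype.card n).cast_nonneg (α := ℝ)]) hc zero_lt_one

end ExpNormSqTraceSmul

lemma trace_expHenckyStressFull_sub_mul_transpose_sub (μ lam k khat : ℝ) (X Y : M3) :
    trace ((expHenckyStressFull μ lam k khat X - expHenckyStressFull μ lam k khat Y) * (X - Y)ᵀ) =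
      2 * μ * trace ((expNormSqTraceSmul k X - expNormSqTraceSmul k Y) * (X - Y)ᵀ) +
        lam * ((trace X * exp (khat * trace X ^ 2 - trace X) -
            trace Y * exp (khat * trace Y ^ 2 - trace Y)) * (trace X - trace Y)) := by
  simp only [expHenckyStressFull, expNormSqTraceSmul, sub_mul, add_mul, smul_mul, one_mul,
    trace_sub, trace_add, trace_smul, trace_transpose, smul_eq_mul, exp_sub, exp_neg]
  ring

/-- For `μ, λ > 0`, `k ≥ 3/8` and `k̂ ≥ 1/8`, the full exponentiated
Hencky stress is Hilbert-monotone on `Sym(3)`; if moreover `k > 3/8`, it is strictly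
Hilbert-monotone. -/
theorem expHenckyFull_monotone (μ lam k khat : ℝ) (hμ : 0 < μ) (hlam : 0 < lam) :
    (3 / 8 ≤ k → 1 / 8 ≤ khat → ∀ X₁ X₂ : M3, X₁.IsSymm → X₂.IsSymm →
      0 ≤ Matrix.trace ((expHenckyStressFull μ lam k khat X₁ -
            expHenckyStressFull μ lam k khat X₂) * (X₁ - X₂)ᵀ)) ∧
    (3 / 8 < k → 1 / 8 ≤ khat → ∀ X₁ X₂ : M3, X₁.IsSymm → X₂.IsSymm → X₁ ≠ X₂ →
      0 < Matrix.trace ((expHenckyStressFull μ lam k khat X₁ -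
            expHenckyStressFull μ lam k khat X₂) * (X₁ - X₂)ᵀ)) := by
  have hcard : (Fintype.card (Fin 3) : ℝ) = 3 := by norm_num
  refine ⟨fun hk hkh X₁ X₂ _ _ => ?_, fun hk hkh X₁ X₂ _ _ hne => ?_⟩
  · rw [trace_expHenckyStressFull_sub_mul_transpose_sub]
    exact add_nonneg (mul_nonneg (by positivity)
      (trace_expNormSqTraceSmul_sub_mul_transpose_sub_nonneg (by linarith) X₁ X₂))
      (mul_nonneg hlam.le (mul_exp_sq_sub_sub_mul_sub_nonneg hkh _ _))
  · rw [trace_expHenckyStressFull_sub_mul_transpose_sub]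
    exact add_pos_of_pos_of_nonneg (mul_pos (by positivity)
      (trace_expNormSqTraceSmul_sub_mul_transpose_sub_pos (by linarith) hne))
      (mul_nonneg hlam.le (mul_exp_sq_sub_sub_mul_sub_nonneg hkh _ _))
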